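/- arXiv:1209.0824 — 7 statements merged into one kernel-verified Lean document; each statement's English description precedes it below -/
import Mathlib

section
/- For every positive integer m, ξ(m) = (1/m^m) · Σ_{j=0}^{m} m^j · m!/j!, where ξ(m) := Σ_{k=0}^{m} C(m,k) (k/m)^k (1 − k/m)^{m−k} (with the convention 0^0 = 1). -/
/-!
Multiplying by `m ^ m` turns `ξ(m)` into `∑ C(m,k) k^k (m-k)^(m-k)`, the value at `x = m` of the
polynomial identity `∑ C(n,k) k^k (x-k)^(n-k) = ∑ C(n,k) k! x^(n-k)`. To prove the latter,
expand `(x-k)^(n-k)` binomially and collect terms by the total power `N` of `k`: the coefficient of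
`x^(n-N)` is `C(n,N)` times the `N`-th forward difference of `t ↦ t^N` at `0`, which is `N!`.
-/

open Finset Nat

theorem sum_neg_one_pow_mul_choose_mul_pow_self {R : Type*} [CommRing R] (N : ℕ) :
    ∑ k ∈ range (N + 1), (-1 : R) ^ (N - k) * N.choose k * (k : R) ^ N = N ! := by
  have h := congr_fun (fwdDiff_iter_eq_factorial (R := R) (n := N)) 0
  rw [fwdDiff_iter_eq_sum_shift] at h
  simpa [zsmul_eq_mul] using h

theorem sum_choose_mul_pow_self_mul_sub_pow {R : Type*} [CommRing R] (x : R) (n : ℕ) :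
    ∑ k ∈ range (n + 1), n.choose k * (k : R) ^ k * (x - k) ^ (n - k) =
      ∑ k ∈ range (n + 1), n.choose k * k ! * x ^ (n - k) := by
  set f : ℕ → ℕ → R := fun k i ↦
    n.choose k * (k : R) ^ k * ((-k) ^ i * x ^ (n - k - i) * (n - k).choose i)
  have expand : ∀ k ∈ range (n + 1),
      n.choose k * (k : R) ^ k * (x - k) ^ (n - k) = ∑ i ∈ range (n + 1 - k), f k i := by
    intro k _
    rw [sub_eq_neg_add, add_pow, mul_sum, show n + 1 - k = n - k + 1 by grind]
  have regroup : ∀ N ∈ range (n + 1), ∑ k ∈ range (N + 1), f k (N - k) =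
      n.choose N * x ^ (n - N) *
        ∑ k ∈ range (N + 1), (-1 : R) ^ (N - k) * N.choose k * (k : R) ^ N := by
    intro N _
    rw [mul_sum]
    refine sum_congr rfl fun k hk ↦ ?_
    have hkN : k ≤ N := Nat.lt_succ_iff.mp (mem_range.mp hk)
    have hchoose : (n.choose k : R) * (n - k).choose (N - k) = n.choose N * N.choose k := by
      exact_mod_cast congrArg (Nat.cast : ℕ → R) (Nat.choose_mul (n := n) hkN).symm
    have hpow : (k : R) ^ k * (k : R) ^ (N - k) = (k : R) ^ N := by
      rw [← pow_add, Nat.add_sub_cancel' hkN]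
    simp only [f, neg_pow (k : R), show n - k - (N - k) = n - N by omega]
    linear_combination ((-1 : R) ^ (N - k) * x ^ (n - N)) *
      ((k : R) ^ k * (k : R) ^ (N - k) * hchoose + n.choose N * N.choose k * hpow)
  rw [sum_congr rfl expand, ← sum_range_diag_flip, sum_congr rfl regroup]
  simp only [sum_neg_one_pow_mul_choose_mul_pow_self]
  exact sum_congr rfl fun _ _ ↦ by ring

theorem div_pow_mul_one_sub_div_pow {K : Type*} [Field K] {x : K} (hx : x ≠ 0) (a : K)
    {k n : ℕ} (hkn : k ≤ n) :
    (a / x) ^ k * (1 - a / x) ^ (n - k) = a ^ k * (x - a) ^ (n - k) / x ^ n := by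
  rw [one_sub_div hx, div_pow, div_pow, ← pow_mul_pow_sub x hkn]
  field_simp

/-- For every positive integer `m`, `ξ(m) = (1/m^m) · Σ_{j=0}^m m^j · m!/j!`. -/
theorem xi_closed_form (m : ℕ) (hm : 0 < m) :
    (∑ k ∈ Finset.range (m + 1),
      (m.choose k : ℝ) * ((k : ℝ) / m) ^ k * (1 - (k : ℝ) / m) ^ (m - k)) =
    (1 / (m : ℝ) ^ m) * ∑ j ∈ Finset.range (m + 1),
      (m : ℝ) ^ j * (m.factorial : ℝ) / (j.factorial : ℝ) := by
  have hm0 : (m : ℝ) ≠ 0 := by positivity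
  calc _ = (1 / (m : ℝ) ^ m) *
        ∑ k ∈ range (m + 1), m.choose k * (k : ℝ) ^ k * (m - k) ^ (m - k) := by
        rw [mul_sum]
        refine sum_congr rfl fun k hk ↦ ?_
        rw [mul_assoc, div_pow_mul_one_sub_div_pow hm0 _ (Nat.lt_succ_iff.mp (mem_range.mp hk))]
        ring
    _ = (1 / (m : ℝ) ^ m) * ∑ k ∈ range (m + 1), m.choose k * (k ! : ℝ) * m ^ (m - k) := by
        rw [sum_choose_mul_pow_self_mul_sub_pow]
    _ = _ := by
        rw [← sum_range_reflect _ (m + 1)]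
        refine congrArg _ (sum_congr rfl fun k hk ↦ ?_)
        have hkm : k ≤ m := Nat.lt_succ_iff.mp (mem_range.mp hk)
        rw [Nat.add_sub_cancel, Nat.choose_symm hkm, Nat.sub_sub_self hkm,
          eq_div_iff (by positivity), ← Nat.choose_mul_factorial_mul_factorial hkm]
        push_cast
        ring
end

section
/- For every positive integer m, ξ₂(m) = (1/m^m) · Σ_{j=0}^{m} m^{m−j} · C(m,j) · (j+1)!, where ξ₂(m) := Σ_{j=0}^{m} Σ_{k=0}^{m−j} C(m,j) C(m−j,k) (j/m)^j (k/m)^k (1 − j/m − k/m)^{m−j−k} (with the convention 0^0 = 1). -/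
/-!
Clearing the denominator `m ^ m` turns `ξ₂(m)` into a double sum of
`C(m,j) C(m-j,k) j^j k^k (m-j-k)^(m-j-k)`. Both summations are then removed by the Abel-type
identity `∑_j C(n,j) j^j (y+n-j)^(n-j) = ∑_j C(n,j) j! (y+n)^(n-j)`: first over `k` with
`n = m - j`, `y = 0`, then, after exchanging the sums, over `j` with `n = m - k`, `y = k`. What
remains is `∑_{k,j} m(m-1)⋯(m-k-j+1) m^(m-k-j)`, and the `s + 1` pairs with `k + j = s` give the
factor `(s + 1)!/s!`.

Both sides of the Abel-type identity are polynomials in `y` of the form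
`∑_j C(n,j) a_j (y + n + c_j)^(n-j)` (`abelPoly`), whose derivative is `n + 1` times the one for
`n` shifted by one, so by induction they agree once they agree at `X = -n`.
There the right side is `n!` trivially, and the left side is `∑_j (-1)^(n-j) C(n,j) j^n = n!`,
the `n`-th forward difference of `x ^ n`.
-/

open Polynomial Finset Nat

theorem Nat.choose_mul_choose_sub_mul_factorial_mul_factorial (m j k : ℕ) :
    m.choose j * (m - j).choose k * (j ! * k !) = m.descFactorial (j + k) := by
  rw [← descFactorial_mul_descFactorial (Nat.le_add_right j k), Nat.add_sub_cancel_left,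
    descFactorial_eq_factorial_mul_choose, descFactorial_eq_factorial_mul_choose]
  ring

theorem Nat.choose_mul_choose_sub_comm (m j k : ℕ) :
    m.choose j * (m - j).choose k = m.choose k * (m - k).choose j := by
  apply Nat.eq_of_mul_eq_mul_right (mul_pos (factorial_pos j) (factorial_pos k))
  rw [choose_mul_choose_sub_mul_factorial_mul_factorial, mul_comm j !,
    choose_mul_choose_sub_mul_factorial_mul_factorial, add_comm]

theorem sum_range_sum_range_sub_eq_sum_range_nsmul {M : Type*} [AddCommMonoid M] (m : ℕ)
    (f : ℕ → M) :
    ∑ k ∈ range (m + 1), ∑ j ∈ range (m - k + 1), f (k + j) =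
      ∑ s ∈ range (m + 1), (s + 1) • f s := by
  calc ∑ k ∈ range (m + 1), ∑ j ∈ range (m - k + 1), f (k + j)
      = ∑ k ∈ range (m + 1), ∑ j ∈ range (m + 1 - k), f (k + j) :=
        sum_congr rfl fun k hk ↦ by rw [Nat.sub_add_comm (mem_range_succ_iff.1 hk)]
    _ = ∑ s ∈ range (m + 1), ∑ k ∈ range (s + 1), f (k + (s - k)) :=
        (sum_range_diag_flip _ fun k j ↦ f (k + j)).symm
    _ = ∑ s ∈ range (m + 1), (s + 1) • f s := by
        refine sum_congr rfl fun s _ ↦ ?_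
        rw [sum_congr rfl fun k hk ↦ by rw [Nat.add_sub_cancel' (mem_range_succ_iff.1 hk)],
          sum_const, card_range]

section

variable {R : Type*} [CommRing R]

theorem sum_neg_one_pow_mul_choose_mul_pow (n : ℕ) :
    ∑ k ∈ range (n + 1), (-1 : R) ^ (n - k) * n.choose k * (k : R) ^ n = n ! := by
  have h := congr_fun (fwdDiff_iter_eq_factorial (R := R) (n := n)) 0
  rw [fwdDiff_iter_eq_sum_shift] at h
  simpa [zsmul_eq_mul] using h

noncomputable def abelPoly (a c : ℕ → R) (n : ℕ) : R[X] :=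
  ∑ j ∈ range (n + 1), C ((n.choose j : R) * a j) * (X + C ((n : R) + c j)) ^ (n - j)

theorem derivative_abelPoly_succ (a c : ℕ → R) (n : ℕ) :
    derivative (abelPoly a c (n + 1)) = C ((n : R) + 1) * (abelPoly a c n).comp (X + 1) := by
  rw [abelPoly, derivative_sum, sum_range_succ, Nat.sub_self, pow_zero, mul_one, derivative_C,
    add_zero, abelPoly, Polynomial.sum_comp, mul_sum]
  refine sum_congr rfl fun j hj ↦ ?_
  have hj : n + 1 - j = n - j + 1 := by have := mem_range.1 hj; omega
  have hcoeff : ((n + 1).choose j : R) * (n - j + 1 : ℕ) = n.choose j * (n + 1) := by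
    rw [← hj]
    exact_mod_cast congrArg (Nat.cast : ℕ → R) (choose_mul_succ_eq n j).symm
  rw [derivative_C_mul, derivative_X_add_C_pow, hj, Nat.add_sub_cancel]
  simp only [mul_comp, C_comp, pow_comp, add_comp, X_comp]
  have hshift : X + C ((n + 1 : ℕ) + c j) = X + 1 + C ((n : R) + c j) := by
    simp only [Nat.cast_succ, C_add, C_1]; ring
  rw [hshift, ← mul_assoc, ← mul_assoc, ← C_mul, ← C_mul]
  congr 2
  linear_combination a j * hcoeff

theorem eq_of_derivative_eq_of_eval_eq [IsAddTorsionFree R] {p q : R[X]} {x : R}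
    (hd : derivative p = derivative q) (he : p.eval x = q.eval x) : p = q := by
  rw [← sub_eq_zero, ← derivative_sub] at hd
  have hconst := eq_C_of_derivative_eq_zero hd
  have hzero := congr_arg (eval x) hconst
  rw [eval_sub, he, sub_self, eval_C] at hzero
  rwa [← hzero, map_zero, sub_eq_zero] at hconst

theorem eval_abelPoly (a c : ℕ → R) (n : ℕ) (y : R) :
    (abelPoly a c n).eval y =
      ∑ j ∈ range (n + 1), n.choose j * a j * (y + (n + c j)) ^ (n - j) := by
  simp [abelPoly, eval_finsetSum]

theorem abelPoly_eq_of_eval_neg_eq [IsAddTorsionFree R] {a c a' c' : ℕ → R}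
    (h : ∀ n : ℕ, (abelPoly a c n).eval (-(n : R)) = (abelPoly a' c' n).eval (-(n : R)))
    (n : ℕ) :
    abelPoly a c n = abelPoly a' c' n := by
  induction n with
  | zero => simpa [abelPoly] using h 0
  | succ n ih =>
    refine eq_of_derivative_eq_of_eval_eq ?_ (h (n + 1))
    rw [derivative_abelPoly_succ, derivative_abelPoly_succ, ih]

theorem eval_neg_abelPoly_pow_self (n : ℕ) :
    (abelPoly (fun j ↦ (j : R) ^ j) (fun j ↦ -(j : R)) n).eval (-(n : R)) = n ! := by
  rw [eval_abelPoly, ← sum_neg_one_pow_mul_choose_mul_pow]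
  refine sum_congr rfl fun j hj ↦ ?_
  rw [show -(n : R) + (n + -j) = -1 * j by ring, mul_pow,
    ← pow_mul_pow_sub (j : R) (Nat.le_of_lt_succ (mem_range.1 hj))]
  ring

theorem eval_neg_abelPoly_factorial (n : ℕ) :
    (abelPoly (fun j ↦ (j ! : R)) 0 n).eval (-(n : R)) = n ! := by
  rw [eval_abelPoly, sum_eq_single_of_mem n (self_mem_range_succ n)]
  · simp
  · intro j hj hjn
    have : n - j ≠ 0 := by have := mem_range.1 hj; omega
    simp [this]

theorem sum_choose_mul_pow_self_mul_add_sub_pow [IsAddTorsionFree R] (n : ℕ) (y : R) :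
    ∑ j ∈ range (n + 1), (n.choose j : R) * (j : R) ^ j * (y + n - j) ^ (n - j) =
      ∑ j ∈ range (n + 1), (n.choose j : R) * j ! * (y + n) ^ (n - j) := by
  have h := congr_arg (eval y) <| abelPoly_eq_of_eval_neg_eq (fun n ↦
    (eval_neg_abelPoly_pow_self n).trans (eval_neg_abelPoly_factorial (R := R) n).symm) n
  simpa [eval_abelPoly, ← sub_eq_add_neg, add_sub_assoc] using h

theorem sum_choose_mul_pow_self_mul_choose_mul_factorial_mul_sub_pow [IsAddTorsionFree R]
    {m k : ℕ} (hkm : k ≤ m) :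
    ∑ j ∈ range (m - k + 1),
      (m.choose j : R) * (j : R) ^ j * ((m - j).choose k * k ! * ((m : R) - j) ^ (m - j - k)) =
    ∑ j ∈ range (m - k + 1), (m.descFactorial (k + j) : R) * (m : R) ^ (m - (k + j)) := by
  have abel := sum_choose_mul_pow_self_mul_add_sub_pow (R := R) (m - k) k
  rw [Nat.cast_sub hkm, add_sub_cancel] at abel
  calc _ = (m.choose k * k ! : R) * ∑ j ∈ range (m - k + 1),
        ((m - k).choose j : R) * (j : R) ^ j * ((m : R) - j) ^ (m - k - j) := by
        rw [mul_sum]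
        refine sum_congr rfl fun j _ ↦ ?_
        have swap := congr_arg (Nat.cast : ℕ → R) (choose_mul_choose_sub_comm m j k)
        push_cast at swap
        rw [Nat.sub_right_comm m j k]
        linear_combination (j : R) ^ j * k ! * ((m : R) - j) ^ (m - k - j) * swap
    _ = _ := by
        rw [abel, mul_sum]
        refine sum_congr rfl fun j _ ↦ ?_
        rw [← choose_mul_choose_sub_mul_factorial_mul_factorial, Nat.sub_sub]
        push_cast
        ring

theorem sum_choose_mul_choose_mul_pow_self [IsAddTorsionFree R] (m : ℕ) :
    ∑ j ∈ range (m + 1), ∑ k ∈ range (m - j + 1), (m.choose j : R) * (m - j).choose k *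
      (j : R) ^ j * (k : R) ^ k * ((m : R) - j - k) ^ (m - j - k) =
    ∑ s ∈ range (m + 1), (m : R) ^ (m - s) * m.choose s * (s + 1)! := by
  calc _ = ∑ j ∈ range (m + 1), ∑ k ∈ range (m - j + 1),
        (m.choose j : R) * (j : R) ^ j *
          ((m - j).choose k * k ! * ((m : R) - j) ^ (m - j - k)) := by
        refine sum_congr rfl fun j hj ↦ ?_
        have abel := sum_choose_mul_pow_self_mul_add_sub_pow (R := R) (m - j) 0
        rw [Nat.cast_sub (mem_range_succ_iff.1 hj), zero_add] at abel
        rw [← mul_sum, ← abel, mul_sum]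
        exact sum_congr rfl fun k _ ↦ by ring
    _ = ∑ k ∈ range (m + 1), ∑ j ∈ range (m - k + 1),
        (m.choose j : R) * (j : R) ^ j * ((m - j).choose k * k ! * ((m : R) - j) ^ (m - j - k)) :=
        sum_comm' fun j k ↦ by simp only [mem_range]; omega
    _ = ∑ k ∈ range (m + 1), ∑ j ∈ range (m - k + 1),
        (m.descFactorial (k + j) : R) * (m : R) ^ (m - (k + j)) :=
        sum_congr rfl fun k hk ↦
          sum_choose_mul_pow_self_mul_choose_mul_factorial_mul_sub_pow (mem_range_succ_iff.1 hk)
    _ = ∑ s ∈ range (m + 1), (s + 1) • ((m.descFactorial s : R) * (m : R) ^ (m - s)) :=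
        sum_range_sum_range_sub_eq_sum_range_nsmul m fun s ↦ (m.descFactorial s : R) * m ^ (m - s)
    _ = _ := sum_congr rfl fun s _ ↦ by
        rw [descFactorial_eq_factorial_mul_choose, factorial_succ, nsmul_eq_mul]
        push_cast
        ring

end

theorem div_pow_mul_div_pow_mul_one_sub_div_pow {K : Type*} [Field K] {x : K} (hx : x ≠ 0)
    (u v : K) {j k m : ℕ} (h : j + k ≤ m) :
    (u / x) ^ j * (v / x) ^ k * (1 - u / x - v / x) ^ (m - j - k) =
      u ^ j * v ^ k * (x - u - v) ^ (m - j - k) / x ^ m := by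
  rw [show x ^ m = x ^ j * x ^ k * x ^ (m - j - k) by rw [← pow_add, ← pow_add]; congr 1; omega,
    show 1 - u / x - v / x = (x - u - v) / x by field_simp, div_pow, div_pow, div_pow]
  field_simp

/-- For every positive integer `m`, `ξ₂(m) = (1/m^m) · Σ_{j=0}^m m^{m-j} · C(m,j) · (j+1)!`. -/
theorem xi2_closed_form (m : ℕ) (hm : 0 < m) :
    (∑ j ∈ Finset.range (m + 1), ∑ k ∈ Finset.range (m - j + 1),
      (m.choose j : ℝ) * ((m - j).choose k : ℝ) * ((j : ℝ) / m) ^ j * ((k : ℝ) / m) ^ k *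
        (1 - (j : ℝ) / m - (k : ℝ) / m) ^ (m - j - k)) =
    (1 / (m : ℝ) ^ m) * ∑ j ∈ Finset.range (m + 1),
      (m : ℝ) ^ (m - j) * (m.choose j : ℝ) * ((j + 1).factorial : ℝ) := by
  have hm0 : (m : ℝ) ≠ 0 := by positivity
  rw [← sum_choose_mul_choose_mul_pow_self, mul_sum]
  refine sum_congr rfl fun j hj ↦ ?_
  rw [mul_sum]
  refine sum_congr rfl fun k hk ↦ ?_
  have hjk : j + k ≤ m := by simp only [mem_range] at hj hk; omega
  linear_combination (m.choose j * (m - j).choose k : ℝ) *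
    div_pow_mul_div_pow_mul_one_sub_div_pow hm0 (j : ℝ) (k : ℝ) hjk
end

section
/- For every natural number m, Σ_{k=0}^{m} C(m,k) · k^k · (m−k)^{m−k} = Σ_{j=0}^{m} m^j · m!/j!, where the convention 0^0 = 1 is used. -/
/-!
Both sides are values at `y = m` of two polynomial families,
`P_n(y) = ∑ C(n,k) k^k (y - k)^(n-k)` and `Q_n(y) = ∑ n(n-1)⋯(n-k+1) y^(n-k)`.
Both are Appell sequences, `P_{n+1}' = (n+1) P_n`, so `P_n = Q_n` by induction once they agree
at one point. At `y = 0` both equal `n!`: for `Q_n` only the last term survives, and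
`P_n(0) = ∑ (-1)^(n-k) C(n,k) k^n` is the `n`-th forward difference of `x ↦ x^n` at `0`.
-/

open Finset Polynomial Nat

theorem sum_range_neg_one_pow_mul_choose_mul_pow_self {R : Type*} [CommRing R] (n : ℕ) :
    ∑ k ∈ range (n + 1), (-1 : R) ^ (n - k) * n.choose k * (k : R) ^ n = n ! := by
  have h := congrFun (fwdDiff_iter_eq_factorial (R := R) (n := n)) 0
  rw [fwdDiff_iter_eq_sum_shift] at h
  simpa [zsmul_eq_mul, mul_assoc] using h

theorem Polynomial.eq_of_derivative_succ_eq_of_eval_eq {R : Type*} [CommRing R]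
    [IsAddTorsionFree R] {p q : ℕ → R[X]} (r : ℕ → R)
    (hp : ∀ n, derivative (p (n + 1)) = C (r n) * p n)
    (hq : ∀ n, derivative (q (n + 1)) = C (r n) * q n)
    (x : R) (hx : ∀ n, (p n).eval x = (q n).eval x) (h0 : p 0 = q 0) : p = q := by
  funext n
  induction n with
  | zero => exact h0
  | succ n ih =>
    have hconst := eq_C_of_derivative_eq_zero (p := p (n + 1) - q (n + 1))
      (by rw [derivative_sub, hp, hq, ih, sub_self])
    have hval : (p (n + 1) - q (n + 1)).eval x = 0 := by rw [eval_sub, hx, sub_self]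
    rw [hconst, eval_C] at hval
    rw [← sub_eq_zero, hconst, hval, map_zero]

section ShiftedPowSum

variable {R : Type*} [CommRing R]

noncomputable def shiftedPowSum (c : ℕ → ℕ → ℕ) (a : ℕ → R) (n : ℕ) : R[X] :=
  ∑ k ∈ range (n + 1), C (c n k : R) * (X - C (a k)) ^ (n - k)

theorem eval_shiftedPowSum (c : ℕ → ℕ → ℕ) (a : ℕ → R) (n : ℕ) (x : R) :
    (shiftedPowSum c a n).eval x = ∑ k ∈ range (n + 1), (c n k : R) * (x - a k) ^ (n - k) := by
  simp [shiftedPowSum, eval_finsetSum]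

theorem derivative_shiftedPowSum_succ {c : ℕ → ℕ → ℕ} (a : ℕ → R) {n : ℕ}
    (hc : ∀ k ≤ n, c (n + 1) k * (n + 1 - k) = (n + 1) * c n k) :
    derivative (shiftedPowSum c a (n + 1)) = C ((n : R) + 1) * shiftedPowSum c a n := by
  rw [shiftedPowSum, derivative_sum, sum_range_succ, Nat.sub_self, pow_zero, mul_one,
    derivative_C, add_zero, shiftedPowSum, mul_sum]
  refine sum_congr rfl fun k hk => ?_
  have hk : k ≤ n := Nat.lt_succ_iff.mp (mem_range.mp hk)
  have hcoeff : (c (n + 1) k : R) * ((n + 1 - k : ℕ) : R) = ((n : R) + 1) * c n k := by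
    rw [← Nat.cast_mul, hc k hk, Nat.cast_mul, Nat.cast_succ]
  rw [derivative_C_mul, derivative_X_sub_C_pow, ← mul_assoc, ← C_mul, hcoeff, C_mul, mul_assoc,
    show n + 1 - k - 1 = n - k by omega]

theorem eval_zero_shiftedPowSum_choose_mul_pow_self (n : ℕ) :
    (shiftedPowSum (fun n k => n.choose k * k ^ k) (Nat.cast : ℕ → R) n).eval 0 = n ! := by
  rw [eval_shiftedPowSum, ← sum_range_neg_one_pow_mul_choose_mul_pow_self]
  refine sum_congr rfl fun k hk => ?_
  have hk : k ≤ n := Nat.lt_succ_iff.mp (mem_range.mp hk)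
  rw [zero_sub, neg_pow, Nat.cast_mul, Nat.cast_pow]
  calc (n.choose k : R) * (k : R) ^ k * ((-1) ^ (n - k) * (k : R) ^ (n - k))
      = (-1) ^ (n - k) * n.choose k * ((k : R) ^ k * (k : R) ^ (n - k)) := by ring
    _ = (-1) ^ (n - k) * n.choose k * (k : R) ^ n := by rw [← pow_add, Nat.add_sub_cancel' hk]

theorem eval_zero_shiftedPowSum_descFactorial (n : ℕ) :
    (shiftedPowSum Nat.descFactorial (0 : ℕ → R) n).eval 0 = n ! := by
  rw [eval_shiftedPowSum, sum_range_succ, sum_eq_zero fun k hk => ?_]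
  · simp [Nat.descFactorial_self]
  · simp [Nat.sub_ne_zero_of_lt (mem_range.mp hk)]

theorem shiftedPowSum_choose_mul_pow_self_eq_descFactorial [IsAddTorsionFree R] :
    shiftedPowSum (fun n k => n.choose k * k ^ k) (Nat.cast : ℕ → R) =
      shiftedPowSum Nat.descFactorial 0 := by
  refine eq_of_derivative_succ_eq_of_eval_eq (fun n => (n : R) + 1)
    (fun n => derivative_shiftedPowSum_succ _ fun k hk => ?_)
    (fun n => derivative_shiftedPowSum_succ _ fun k hk => ?_) 0 (fun n => ?_)
    (by simp [shiftedPowSum])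
  · rw [mul_right_comm, ← choose_mul_succ_eq]
    ring
  · rw [mul_comm, ← Nat.descFactorial_succ, Nat.succ_descFactorial_succ]
  · rw [eval_zero_shiftedPowSum_choose_mul_pow_self, eval_zero_shiftedPowSum_descFactorial]

end ShiftedPowSum

theorem sum_range_pow_mul_factorial_div_factorial (m : ℕ) :
    ∑ j ∈ range (m + 1), m ^ j * (m ! / j !) =
      ∑ k ∈ range (m + 1), m.descFactorial k * m ^ (m - k) := by
  rw [← sum_range_reflect]
  refine sum_congr rfl fun k hk => ?_
  have hk : k ≤ m := Nat.lt_succ_iff.mp (mem_range.mp hk)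
  rw [Nat.add_sub_cancel, Nat.descFactorial_eq_div hk, mul_comm]

/-- For every natural number `m`,
`Σ_{k=0}^m C(m,k) k^k (m-k)^{m-k} = Σ_{j=0}^m m^j · m!/j!`. -/
theorem alpha_closed_form (m : ℕ) :
    (∑ k ∈ Finset.range (m + 1), m.choose k * k ^ k * (m - k) ^ (m - k)) =
    ∑ j ∈ Finset.range (m + 1), m ^ j * (m.factorial / j.factorial) := by
  have h := congrArg (fun p => (p m).eval (m : ℤ))
    (shiftedPowSum_choose_mul_pow_self_eq_descFactorial (R := ℤ))
  simp only [eval_shiftedPowSum, Pi.zero_apply, sub_zero] at h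
  rw [sum_range_pow_mul_factorial_div_factorial]
  zify
  convert h using 2 with k hk
  rw [Nat.cast_sub (Nat.lt_succ_iff.mp (mem_range.mp hk))]
  push_cast
  ring
end

section
/- For every natural number m, Σ_{j=0}^{m} Σ_{k=0}^{m−j} C(m,j) · C(m−j,k) · j^j · k^k · (m−j−k)^{m−j−k} = Σ_{j=0}^{m} m^{m−j} · C(m,j) · (j+1)!, where the convention 0^0 = 1 is used. -/
/-!
Write `β(m) = Σ_j C(m,j) j^j R_{m-j}(0,0)` with Riordan's sum
`R_n(x,y) = Σ_k C(n,k) (x+k)^k (y+n-k)^(n-k)`. Riordan's identity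
`R_n(x,y) = Σ_t n↓t (x+y+n)^(n-t)` is proved by induction on `n` together with Abel's identity
`Σ_k C(n,k) x (x+k)^(k-1) (y+n-k)^(n-k) = (x+y+n)^n`: Pascal's rule expresses Abel's sum at
`n+1` through Abel's and Riordan's sums at `n`, and Riordan's sum at `n+1` is Abel's sum plus
`(n+1) R_n(x+1,y)`. Expanding `R_{m-j}(0,0)`, exchanging the sums and using
`C(m,j) (m-j)↓k = m↓k C(m-k,j)` brings Riordan's sums `R_{m-k}(0,k)` back, so a second use of the
identity gives `β(m) = Σ_k m↓k Σ_i (m-k)↓i m^(m-k-i) = Σ_t (t+1) m↓t m^(m-t)`.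
-/

open Finset

section AbelRiordan

variable {R : Type*} [CommSemiring R]

/-- `x (x + i)^(i-1)`, with the value `1` at `i = 0` that this expression has as a rational
function of `x`. -/
def abelCoeff (x : R) : ℕ → R
  | 0 => 1
  | i + 1 => x * (x + (i + 1 : ℕ)) ^ i

def abelSum (n : ℕ) (x y : R) : R :=
  ∑ p ∈ antidiagonal n, n.choose p.1 * (abelCoeff x p.1 * (y + p.2) ^ p.2)

def riordanSum (n : ℕ) (x y : R) : R :=
  ∑ p ∈ antidiagonal n, n.choose p.1 * ((x + p.1) ^ p.1 * (y + p.2) ^ p.2)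

def descFactorialSum (n : ℕ) (s : R) : R :=
  ∑ p ∈ antidiagonal n, n.descFactorial p.1 * s ^ p.2

lemma add_mul_abelCoeff (x : R) (i : ℕ) : (x + i) * abelCoeff x i = x * (x + i) ^ i := by
  cases i
  · simp [abelCoeff]
  · simp only [abelCoeff]
    ring

lemma descFactorialSum_eq_sum_range (n : ℕ) (s : R) :
    descFactorialSum n s = ∑ t ∈ range (n + 1), n.descFactorial t * s ^ (n - t) :=
  Nat.sum_antidiagonal_eq_sum_range_succ (fun t u => (n.descFactorial t : R) * s ^ u) n

lemma riordanSum_eq_sum_range (n : ℕ) (x y : R) :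
    riordanSum n x y
      = ∑ k ∈ range (n + 1), n.choose k * ((x + k) ^ k * (y + (n - k : ℕ)) ^ (n - k)) :=
  Nat.sum_antidiagonal_eq_sum_range_succ
    (fun i j => (n.choose i : R) * ((x + i) ^ i * (y + j) ^ j)) n

lemma descFactorialSum_succ (n : ℕ) (s : R) :
    descFactorialSum (n + 1) s = s ^ (n + 1) + (n + 1) * descFactorialSum n s := by
  simp only [descFactorialSum, Nat.sum_antidiagonal_succ, mul_sum, Nat.succ_descFactorial_succ]
  push_cast
  simp [mul_assoc]

lemma riordanSum_succ (n : ℕ) (x y : R) :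
    riordanSum (n + 1) x y = abelSum (n + 1) x y + (n + 1) * riordanSum n (x + 1) y := by
  simp only [riordanSum, abelSum, Nat.sum_antidiagonal_succ, mul_sum, add_assoc,
    ← sum_add_distrib]
  simp only [Nat.choose_zero_right, Nat.cast_zero, add_zero, pow_zero, abelCoeff]
  congr 1
  refine sum_congr rfl fun p _ => ?_
  have h := congrArg (Nat.cast : ℕ → R) (Nat.add_one_mul_choose_eq n p.1)
  push_cast at h ⊢
  calc ((n + 1).choose (p.1 + 1) : R) * ((x + (p.1 + 1)) ^ (p.1 + 1) * (y + p.2) ^ p.2)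
      = (n + 1).choose (p.1 + 1) * (x * (x + (p.1 + 1)) ^ p.1 * (y + p.2) ^ p.2)
        + (n + 1).choose (p.1 + 1) * (p.1 + 1) * ((x + (p.1 + 1)) ^ p.1 * (y + p.2) ^ p.2) := by
        ring
    _ = _ := by rw [← h]; ring

lemma abelSum_succ (n : ℕ) (x y : R) :
    abelSum (n + 1) x y + x * riordanSum n x (y + 1)
      = (x + y + (n + 1)) * abelSum n x (y + 1) + x * riordanSum n (x + 1) y := by
  rw [abelSum, sum_antidiagonal_choose_succ_mul (fun i j => abelCoeff x i * (y + j) ^ j),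
    add_right_comm, riordanSum, riordanSum, abelSum, mul_sum, mul_sum, mul_sum,
    ← sum_add_distrib]
  congr 1
  · -- `x + y + (n + 1) = (x + i) + (y + 1 + j)` splits off the extra factor `y + 1 + j`
    refine sum_congr rfl fun p hp => ?_
    have hn : (p.1 + p.2 : R) = n := by rw [← Nat.cast_add, mem_antidiagonal.mp hp]
    rw [← hn, mul_left_comm x, ← mul_assoc x, ← add_mul_abelCoeff]
    push_cast
    ring
  · refine sum_congr rfl fun p hp => ?_
    rw [Nat.choose_symm_of_eq_add (mem_antidiagonal.mp hp).symm, abelCoeff]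
    push_cast
    ring

theorem abelSum_eq_pow_and_riordanSum_eq [IsRightCancelAdd R] (n : ℕ) :
    (∀ x y : R, abelSum n x y = (x + y + n) ^ n) ∧
      ∀ x y : R, riordanSum n x y = descFactorialSum n (x + y + n) := by
  induction n with
  | zero => simp [abelSum, riordanSum, descFactorialSum, abelCoeff]
  | succ n ih =>
    obtain ⟨ihAbel, ihRiordan⟩ := ih
    have hAbel (x y : R) : abelSum (n + 1) x y = (x + y + (n + 1 : ℕ)) ^ (n + 1) := by
      have h := abelSum_succ n x y
      rw [ihAbel, ihRiordan, ihRiordan, show x + (y + 1) + n = x + 1 + y + n by ring] at h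
      push_cast
      exact add_right_cancel (h.trans (by ring))
    refine ⟨hAbel, fun x y => ?_⟩
    rw [riordanSum_succ, hAbel, ihRiordan, descFactorialSum_succ,
      show x + 1 + y + n = x + y + (n + 1 : ℕ) by push_cast; ring]

theorem riordanSum_eq_descFactorialSum [IsRightCancelAdd R] (n : ℕ) (x y : R) :
    riordanSum n x y = descFactorialSum n (x + y + n) :=
  (abelSum_eq_pow_and_riordanSum_eq n).2 x y

theorem sum_descFactorial_mul_descFactorialSum (n : ℕ) (s : R) :
    ∑ p ∈ antidiagonal n, n.descFactorial p.1 * descFactorialSum p.2 s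
      = ∑ p ∈ antidiagonal n, (p.1 + 1) * n.descFactorial p.1 * s ^ p.2 := by
  induction n with
  | zero => simp [descFactorialSum]
  | succ n ih =>
    simp only [Nat.sum_antidiagonal_succ, Nat.succ_descFactorial_succ, Nat.descFactorial_zero]
    push_cast
    have hl : ∑ p ∈ antidiagonal n, (n + 1 : R) * n.descFactorial p.1 * descFactorialSum p.2 s
        = (n + 1) * ∑ p ∈ antidiagonal n, n.descFactorial p.1 * descFactorialSum p.2 s := by
      simp only [mul_sum, mul_assoc]
    have hr : ∑ p ∈ antidiagonal n, (p.1 + 1 + 1 : R) * ((n + 1) * n.descFactorial p.1) * s ^ p.2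
        = (n + 1) * (∑ p ∈ antidiagonal n, (p.1 + 1 : R) * n.descFactorial p.1 * s ^ p.2
          + descFactorialSum n s) := by
      rw [descFactorialSum, ← sum_add_distrib, mul_sum]
      exact sum_congr rfl fun p _ => by ring
    rw [hl, hr, ih, descFactorialSum_succ]
    ring

end AbelRiordan

lemma Nat.choose_mul_descFactorial_sub (m j k : ℕ) :
    m.choose j * (m - j).descFactorial k = m.descFactorial k * (m - k).choose j := by
  have hj := Nat.choose_mul (n := m) (Nat.le_add_right j k)
  have hk := Nat.choose_mul (n := m) (Nat.le_add_left k j)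
  rw [Nat.choose_symm_add, hk, Nat.add_sub_cancel_left, Nat.add_sub_cancel] at hj
  rw [Nat.descFactorial_eq_factorial_mul_choose, Nat.descFactorial_eq_factorial_mul_choose,
    mul_left_comm, ← hj, mul_assoc]

theorem sum_choose_mul_descFactorialSum (m x y : ℕ) :
    ∑ j ∈ range (m + 1), m.choose j * (x + j) ^ j * descFactorialSum (m - j) (y + (m - j))
      = ∑ k ∈ range (m + 1), m.descFactorial k * descFactorialSum (m - k) (x + y + m) := by
  calc _ = ∑ j ∈ range (m + 1), ∑ k ∈ range (m - j + 1),
        m.choose j * (x + j) ^ j * ((m - j).descFactorial k * (y + (m - j)) ^ (m - j - k)) := by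
        simp only [descFactorialSum_eq_sum_range, mul_sum, Nat.cast_id]
    _ = ∑ k ∈ range (m + 1), ∑ j ∈ range (m - k + 1),
        m.choose j * (x + j) ^ j * ((m - j).descFactorial k * (y + (m - j)) ^ (m - j - k)) :=
        sum_comm' fun j k => by simp only [mem_range]; omega
    _ = ∑ k ∈ range (m + 1), m.descFactorial k * riordanSum (m - k) x (y + k) := by
        refine sum_congr rfl fun k hk => ?_
        rw [riordanSum_eq_sum_range, mul_sum]
        refine sum_congr rfl fun j hj => ?_
        have hk := mem_range.mp hk
        have hj := mem_range.mp hj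
        rw [show y + (m - j) = y + k + (m - k - j) by omega, show m - j - k = m - k - j by omega,
          ← mul_assoc, mul_right_comm (m.choose j), Nat.choose_mul_descFactorial_sub]
        simp only [Nat.cast_id]
        ring
    _ = _ := by
        refine sum_congr rfl fun k hk => ?_
        rw [riordanSum_eq_descFactorialSum, Nat.cast_id,
          show x + (y + k) + (m - k) = x + y + m by have := mem_range.mp hk; omega]

/-- For every natural number `m`,
`Σ_{j=0}^m Σ_{k=0}^{m-j} C(m,j) C(m-j,k) j^j k^k (m-j-k)^{m-j-k}
  = Σ_{j=0}^m m^{m-j} C(m,j) (j+1)!`. -/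
theorem beta_closed_form (m : ℕ) :
    (∑ j ∈ Finset.range (m + 1), ∑ k ∈ Finset.range (m - j + 1),
      m.choose j * (m - j).choose k * j ^ j * k ^ k * (m - j - k) ^ (m - j - k)) =
    ∑ j ∈ Finset.range (m + 1), m ^ (m - j) * m.choose j * (j + 1).factorial := by
  have inner (j : ℕ) : ∑ k ∈ range (m - j + 1),
      m.choose j * (m - j).choose k * j ^ j * k ^ k * (m - j - k) ^ (m - j - k)
        = m.choose j * (0 + j) ^ j * descFactorialSum (m - j) (0 + (m - j)) := by
    have h := riordanSum_eq_descFactorialSum (m - j) 0 0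
    rw [riordanSum_eq_sum_range] at h
    simp only [zero_add, Nat.cast_id] at h ⊢
    rw [← h, mul_sum]
    exact sum_congr rfl fun k _ => by ring
  calc _ = ∑ j ∈ range (m + 1),
        m.choose j * (0 + j) ^ j * descFactorialSum (m - j) (0 + (m - j)) :=
        sum_congr rfl fun j _ => inner j
    _ = ∑ p ∈ antidiagonal m, m.descFactorial p.1 * descFactorialSum p.2 m := by
        rw [sum_choose_mul_descFactorialSum, Nat.sum_antidiagonal_eq_sum_range_succ
          (fun k l => m.descFactorial k * descFactorialSum l m), zero_add, zero_add]
    _ = ∑ p ∈ antidiagonal m, (p.1 + 1) * m.descFactorial p.1 * m ^ p.2 :=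
        sum_descFactorial_mul_descFactorialSum m m
    _ = _ := by
        rw [Nat.sum_antidiagonal_eq_sum_range_succ
          (fun t u => (t + 1) * m.descFactorial t * m ^ u)]
        refine sum_congr rfl fun t _ => ?_
        rw [Nat.descFactorial_eq_factorial_mul_choose, Nat.factorial_succ]
        ring
end

section
/- For every natural number m, Σ_{j=0}^{m} m^{m−j} · C(m,j) · (j+1)! − Σ_{j=0}^{m} m^j · m!/j! = m^{m+1}. -/
/-! Reflecting `j ↦ m - j` writes the first sum as `Σ (m - j + 1) u_j` with `u_j = m^j m!/j!` the
terms of the second sum, so the difference is `Σ (m - j) u_j`. Since `j u_j = m u_{j-1}`, this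
telescopes to `m u_m = m^(m+1)`. -/

open Finset Nat

theorem mul_sum_range_succ_eq_sum_mul_add {R : Type*} [CommSemiring R] (u : ℕ → R) (m : R)
    (n : ℕ) (h : ∀ j < n, ((j : R) + 1) * u (j + 1) = m * u j) :
    m * ∑ j ∈ range (n + 1), u j = ∑ j ∈ range (n + 1), (j : R) * u j + m * u n := by
  have hshift : ∑ j ∈ range (n + 1), (j : R) * u j = m * ∑ j ∈ range n, u j := by
    rw [sum_range_succ', mul_sum]
    simp only [Nat.cast_zero, zero_mul, add_zero, Nat.cast_succ]
    exact sum_congr rfl fun j hj => h j (mem_range.mp hj)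
  rw [hshift, sum_range_succ, mul_add]

theorem Nat.factorial_div_factorial_eq_descFactorial {m j : ℕ} (h : j ≤ m) :
    m ! / j ! = m.descFactorial (m - j) := by
  rw [descFactorial_eq_div (sub_le m j), Nat.sub_sub_self h]

theorem Nat.succ_mul_factorial_div_factorial_succ {m j : ℕ} (h : j < m) :
    (j + 1) * (m ! / (j + 1)!) = m ! / j ! := by
  rw [factorial_div_factorial_eq_descFactorial h, factorial_div_factorial_eq_descFactorial h.le,
    show m - j = m - (j + 1) + 1 by omega, descFactorial_succ,
    show m - (m - (j + 1)) = j + 1 by omega]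

theorem sum_pow_mul_choose_mul_factorial_succ_eq (m : ℕ) :
    ∑ j ∈ range (m + 1), m ^ (m - j) * m.choose j * (j + 1)! =
      ∑ j ∈ range (m + 1), (m - j + 1) * (m ^ j * (m ! / j !)) := by
  rw [← sum_range_reflect]
  refine sum_congr rfl fun j hj => ?_
  have hjm : j ≤ m := Nat.lt_succ_iff.mp (mem_range.mp hj)
  rw [add_tsub_cancel_right, Nat.sub_sub_self hjm, factorial_div_factorial_eq_descFactorial hjm,
    descFactorial_eq_factorial_mul_choose, factorial_succ]
  ring

/-- For every natural number `m`,
`Σ_{j=0}^m m^{m-j} C(m,j) (j+1)! - Σ_{j=0}^m m^j · m!/j! = m^{m+1}`. -/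
theorem closed_forms_difference (m : ℕ) :
    (∑ j ∈ Finset.range (m + 1), m ^ (m - j) * m.choose j * (j + 1).factorial) -
    (∑ j ∈ Finset.range (m + 1), m ^ j * (m.factorial / j.factorial)) =
    m ^ (m + 1) := by
  rw [sum_pow_mul_choose_mul_factorial_succ_eq]
  have hrec : ∀ j < m, (j + 1) * (m ^ (j + 1) * (m ! / (j + 1)!)) = m * (m ^ j * (m ! / j !)) :=
    fun j hj => by rw [← succ_mul_factorial_div_factorial_succ hj]; ring
  have htel := mul_sum_range_succ_eq_sum_mul_add (fun j => m ^ j * (m ! / j !)) m m hrec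
  have hweights : ∑ j ∈ range (m + 1), (m - j + 1) * (m ^ j * (m ! / j !)) +
      ∑ j ∈ range (m + 1), j * (m ^ j * (m ! / j !)) =
      m * ∑ j ∈ range (m + 1), m ^ j * (m ! / j !) + ∑ j ∈ range (m + 1), m ^ j * (m ! / j !) := by
    rw [← sum_add_distrib, ← add_one_mul, mul_sum]
    refine sum_congr rfl fun j hj => ?_
    rw [← add_mul, show m - j + 1 + j = m + 1 by have := mem_range.mp hj; omega]
  have hlast : m * (m ^ m * (m ! / m !)) = m ^ (m + 1) := by
    rw [Nat.div_self (factorial_pos m), pow_succ]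
    ring
  simp only [Nat.cast_id] at htel
  omega
end

section
/- (Cauchy's binomial identity, case p = q = 0 of Abel-type sums) For every natural number m and all real numbers x, y: Σ_{k=0}^{m} C(m,k) · (x+k)^k · (y+m−k)^{m−k} = Σ_{k=0}^{m} C(m,k) · k! · (x+y+m)^{m−k}. -/
/-!
Substituting `y + (m - k) = s - (x + k)` with `s = x + y + m` and expanding
`C(m,k) (x+k)^k (s - (x+k))^(m-k)` in powers of `x + k`, the left-hand side becomes
`Σ_n C(m,n) s^(m-n) Σ_k (-1)^(n-k) C(n,k) (x+k)^n`. The inner sum is the `n`-th forward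
difference of `t ↦ t^n` at `x`, which is the constant `n!`.
-/

open Finset
open scoped Nat

variable {R : Type*} [CommRing R]

theorem sum_neg_one_pow_mul_choose_mul_add_pow (n : ℕ) (x : R) :
    ∑ k ∈ range (n + 1), (-1) ^ (n - k) * (n.choose k : R) * (x + k) ^ n = n ! := by
  have h := congr_fun (fwdDiff_iter_eq_factorial (R := R) (n := n)) x
  rw [fwdDiff_iter_eq_sum_shift] at h
  simpa [zsmul_eq_mul] using h

theorem choose_mul_pow_mul_sub_pow {m k : ℕ} (hkm : k ≤ m) (a b : R) :
    (m.choose k : R) * a ^ k * (b - a) ^ (m - k) =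
      ∑ n ∈ range (m + 1),
        (-1) ^ (n - k) * (m.choose n * n.choose k : R) * a ^ n * b ^ (m - n) := by
  rw [← sum_range_add_sum_Ico _ (by omega : k ≤ m + 1),
    sum_eq_zero fun n hn => by simp [Nat.choose_eq_zero_of_lt (mem_range.1 hn)],
    zero_add, sum_Ico_eq_sum_range, Nat.sub_add_comm hkm, sub_eq_neg_add, add_pow, mul_sum]
  refine sum_congr rfl fun j hj => ?_
  have hjm : j ≤ m - k := mem_range_succ_iff.1 hj
  rw [add_tsub_cancel_left, ← Nat.cast_mul, Nat.choose_mul (Nat.le_add_right k j),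
    add_tsub_cancel_left, show m - (k + j) = m - k - j by omega]
  push_cast
  ring

theorem sum_range_choose_mul_add_pow_mul_add_pow (m : ℕ) (x y : R) :
    ∑ k ∈ range (m + 1), (m.choose k : R) * (x + k) ^ k * (y + (m - k : ℕ)) ^ (m - k) =
      ∑ k ∈ range (m + 1), (m.choose k : R) * k ! * (x + y + m) ^ (m - k) := by
  calc _ = ∑ k ∈ range (m + 1), ∑ n ∈ range (m + 1),
          (-1) ^ (n - k) * (m.choose n * n.choose k : R) * (x + k) ^ n *
            (x + y + m) ^ (m - n) := by
        refine sum_congr rfl fun k hk => ?_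
        have hkm : k ≤ m := mem_range_succ_iff.1 hk
        rw [Nat.cast_sub hkm, show y + ((m : R) - k) = x + y + m - (x + k) by ring,
          choose_mul_pow_mul_sub_pow hkm]
    _ = ∑ n ∈ range (m + 1), (m.choose n : R) * (x + y + m) ^ (m - n) *
          ∑ k ∈ range (m + 1), (-1) ^ (n - k) * (n.choose k : R) * (x + k) ^ n := by
        rw [sum_comm]
        refine sum_congr rfl fun n _ => ?_
        rw [mul_sum]
        exact sum_congr rfl fun k _ => by ring
    _ = _ := by
        refine sum_congr rfl fun n hn => ?_
        have hnm : n + 1 ≤ m + 1 := mem_range.1 hn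
        rw [← sum_subset (range_subset_range.2 hnm) fun k _ hk => by
            simp [Nat.choose_eq_zero_of_lt (by simpa using hk : n < k)],
          sum_neg_one_pow_mul_choose_mul_add_pow]
        ring

/-- Cauchy's binomial identity (the case `p = q = 0` of Abel-type sums):
for every natural number `m` and all real `x, y`,
`Σ_{k=0}^m C(m,k) (x+k)^k (y+m-k)^{m-k} = Σ_{k=0}^m C(m,k) k! (x+y+m)^{m-k}`. -/
theorem cauchy_binomial_identity (m : ℕ) (x y : ℝ) :
    (∑ k ∈ Finset.range (m + 1),
      (m.choose k : ℝ) * (x + k) ^ k * (y + (m - k : ℕ)) ^ (m - k)) =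
    ∑ k ∈ Finset.range (m + 1),
      (m.choose k : ℝ) * (k.factorial : ℝ) * (x + y + m) ^ (m - k) :=
  sum_range_choose_mul_add_pow_mul_add_pow m x y
end

section
/- (Hurwitz's multinomial identity, case of vanishing exponent shifts, for n = 3) For every natural number m and all real numbers x₁, x₂, x₃: Σ_{k₁+k₂+k₃=m} m!/(k₁!·k₂!·k₃!) · (x₁+k₁)^{k₁} · (x₂+k₂)^{k₂} · (x₃+k₃)^{k₃} = Σ_{k=0}^{m} C(m,k) · (x₁+x₂+x₃+m)^{m−k} · (k+1)!, where the outer sum on the left is over all triples of natural numbers (k₁,k₂,k₃) with k₁+k₂+k₃ = m. -/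
/-!
Grouping the first two coordinates writes the left side as
`∑_{r+c=m} C(m,r) (∑_{a+b=r} C(r,a) (x₁+a)^a (x₂+b)^b) (x₃+c)^c`. The inner sum is given by
Abel's identity `∑_{a+b=r} C(r,a) (x+a)^a (y+b)^b = ∑_{t+s=r} C(r,t) t! (x+y+r)^s`, which
follows by expanding `(y+b)^b = ((x+y+r) - (x+a))^b` and recognising
`∑_{k+i=t} (-1)^i C(t,k) (x+k)^t = t!` as the `t`-th forward difference of `X^t`.
Reassociating the resulting triple binomial convolution and applying Abel's identity once more
leaves `∑_{w+v=m} C(m,w) (∑_{t+u=w} C(w,t) t! u!) (x₁+x₂+x₃+m)^v`, and the inner sum is `(w+1)!`.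
-/

open Finset
open scoped Nat

theorem Nat.choose_mul_choose_add_add (a b c : ℕ) :
    (a + b + c).choose (a + b) * (a + b).choose a = (a + b + c).choose a * (b + c).choose b := by
  rw [Nat.choose_mul (Nat.le_add_right a b)]
  congr 2 <;> omega

theorem Finset.Nat.sum_antidiagonal_choose_sum_antidiagonal_choose_assoc {R : Type*}
    [CommSemiring R] (n : ℕ) (c : ℕ → R) (d : ℕ → ℕ → R) (e : ℕ → R) :
    ∑ p ∈ antidiagonal n, n.choose p.1 *
        (∑ q ∈ antidiagonal p.1, p.1.choose q.1 * c q.1 * d q.1 q.2) * e p.2 =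
      ∑ p ∈ antidiagonal n, n.choose p.1 * c p.1 *
        ∑ q ∈ antidiagonal p.2, p.2.choose q.1 * d p.1 q.1 * e q.2 := by
  simp only [mul_sum, sum_mul]
  rw [sum_sigma', sum_sigma']
  refine sum_nbij' (fun a ↦ ⟨(a.2.1, a.2.2 + a.1.2), (a.2.2, a.1.2)⟩)
    (fun a ↦ ⟨(a.1.1 + a.2.1, a.2.2), (a.1.1, a.2.1)⟩) ?_ ?_ ?_ ?_ ?_
  all_goals
    rintro ⟨⟨r, k⟩, t, s⟩ h
    simp only [mem_sigma, HasAntidiagonal.mem_antidiagonal] at h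
  · simp only [mem_sigma, HasAntidiagonal.mem_antidiagonal, and_true]; omega
  · simp only [mem_sigma, HasAntidiagonal.mem_antidiagonal, and_true]; omega
  · simp only [h.2]
  · simp only [h.2]
  · obtain ⟨rfl, rfl⟩ := h
    dsimp only
    calc _ = (((t + s + k).choose (t + s) * (t + s).choose t : ℕ) : R) * (c t * d t s * e k) := by
          push_cast; ring
      _ = _ := by rw [Nat.choose_mul_choose_add_add]; push_cast; ring

theorem Finset.Nat.sum_antidiagonalTuple_three {M : Type*} [AddCommMonoid M] (n : ℕ)
    (f : ℕ → ℕ → ℕ → M) :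
    ∑ k ∈ antidiagonalTuple 3 n, f (k 0) (k 1) (k 2) =
      ∑ p ∈ antidiagonal n, ∑ q ∈ antidiagonal p.1, f q.1 q.2 p.2 := by
  rw [sum_sigma']
  refine sum_nbij' (fun k ↦ ⟨(k 0 + k 1, k 2), (k 0, k 1)⟩) (fun a ↦ ![a.2.1, a.2.2, a.1.2])
    ?_ ?_ ?_ ?_ ?_
  · simp +contextual [mem_antidiagonalTuple, Fin.sum_univ_three]
  · simp +contextual [mem_antidiagonalTuple, Fin.sum_univ_three]
  · intro k _
    ext i
    fin_cases i <;> rfl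
  · simp +contextual
  · simp

section CommRing

variable {R : Type*} [CommRing R]

theorem sum_antidiagonal_neg_one_pow_mul_choose_mul_add_pow (t : ℕ) (x : R) :
    ∑ p ∈ antidiagonal t, (-1) ^ p.2 * t.choose p.1 * (x + p.1) ^ t = t ! := by
  have h := fwdDiff_iter_eq_sum_shift (h := (1 : R)) (fun r ↦ r ^ t) t x
  rw [fwdDiff_iter_eq_factorial] at h
  rw [Nat.sum_antidiagonal_eq_sum_range_succ (fun a b ↦ (-1 : R) ^ b * t.choose a * (x + a) ^ t)]
  simpa [zsmul_eq_mul] using h.symm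

theorem sum_antidiagonal_choose_mul_add_pow_mul_add_pow (n : ℕ) (x y : R) :
    ∑ p ∈ antidiagonal n, n.choose p.1 * (x + p.1) ^ p.1 * (y + p.2) ^ p.2 =
      ∑ p ∈ antidiagonal n, n.choose p.1 * p.1 ! * (x + y + n) ^ p.2 := by
  calc _ = ∑ p ∈ antidiagonal n, n.choose p.1 * (x + p.1) ^ p.1 *
          ∑ q ∈ antidiagonal p.2, p.2.choose q.1 * (-(x + p.1)) ^ q.1 * (x + y + n) ^ q.2 := by
        refine sum_congr rfl fun p hp ↦ ?_
        have hy : y + p.2 = -(x + p.1) + (x + y + n) := by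
          rw [← HasAntidiagonal.mem_antidiagonal.mp hp]; push_cast; ring
        rw [hy, (Commute.all (-(x + p.1)) _).add_pow']
        exact congrArg _ (sum_congr rfl fun q _ ↦ by rw [nsmul_eq_mul]; ring)
    _ = ∑ p ∈ antidiagonal n, n.choose p.1 *
          (∑ q ∈ antidiagonal p.1, p.1.choose q.1 * (x + q.1) ^ q.1 * (-(x + q.1)) ^ q.2) *
            (x + y + n) ^ p.2 :=
        (Nat.sum_antidiagonal_choose_sum_antidiagonal_choose_assoc n (fun k ↦ (x + k) ^ k)
          (fun k i ↦ (-(x + k)) ^ i) (fun s ↦ (x + y + n) ^ s)).symm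
    _ = _ := by
        refine sum_congr rfl fun p _ ↦ ?_
        rw [← sum_antidiagonal_neg_one_pow_mul_choose_mul_add_pow p.1 x]
        congr 2
        refine sum_congr rfl fun q hq ↦ ?_
        rw [← HasAntidiagonal.mem_antidiagonal.mp hq, neg_pow, pow_add]
        ring

theorem sum_antidiagonal_choose_mul_sum_mul_add_pow (c : ℕ → R) (n : ℕ) (x z : R) :
    ∑ p ∈ antidiagonal n, n.choose p.1 *
        (∑ q ∈ antidiagonal p.1, p.1.choose q.1 * c q.1 * (x + p.1) ^ q.2) * (z + p.2) ^ p.2 =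
      ∑ p ∈ antidiagonal n, n.choose p.1 *
        (∑ q ∈ antidiagonal p.1, p.1.choose q.1 * c q.1 * q.2 !) * (x + z + n) ^ p.2 := by
  calc _ = ∑ p ∈ antidiagonal n, n.choose p.1 *
          (∑ q ∈ antidiagonal p.1, p.1.choose q.1 * c q.1 * (x + q.1 + q.2) ^ q.2) *
            (z + p.2) ^ p.2 := by
        refine sum_congr rfl fun p _ ↦ ?_
        congr 2
        refine sum_congr rfl fun q hq ↦ ?_
        rw [← HasAntidiagonal.mem_antidiagonal.mp hq]
        push_cast
        ring
    _ = ∑ p ∈ antidiagonal n, n.choose p.1 * c p.1 *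
          ∑ q ∈ antidiagonal p.2, p.2.choose q.1 * (x + p.1 + q.1) ^ q.1 * (z + q.2) ^ q.2 :=
        Nat.sum_antidiagonal_choose_sum_antidiagonal_choose_assoc n c
          (fun t s ↦ (x + t + s) ^ s) (fun e ↦ (z + e) ^ e)
    _ = ∑ p ∈ antidiagonal n, n.choose p.1 * c p.1 *
          ∑ q ∈ antidiagonal p.2, p.2.choose q.1 * q.1 ! * (x + z + n) ^ q.2 := by
        refine sum_congr rfl fun p hp ↦ ?_
        rw [sum_antidiagonal_choose_mul_add_pow_mul_add_pow,
          ← HasAntidiagonal.mem_antidiagonal.mp hp]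
        push_cast
        ring_nf
    _ = _ := (Nat.sum_antidiagonal_choose_sum_antidiagonal_choose_assoc n c
          (fun _ u ↦ (u ! : R)) (fun v ↦ (x + z + n) ^ v)).symm

end CommRing

theorem Nat.sum_antidiagonal_choose_mul_factorial_mul_factorial (n : ℕ) :
    ∑ p ∈ antidiagonal n, n.choose p.1 * p.1 ! * p.2 ! = (n + 1)! := by
  calc _ = ∑ _p ∈ antidiagonal n, n ! := sum_congr rfl fun p hp ↦ by
          rw [← HasAntidiagonal.mem_antidiagonal.mp hp, Nat.choose_symm_add,
            Nat.add_choose_mul_factorial_mul_factorial]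
    _ = (n + 1)! := by rw [sum_const, Nat.card_antidiagonal, smul_eq_mul, Nat.factorial_succ]

theorem Nat.cast_add_add_choose_mul_choose {K : Type*} [Field K] [CharZero K] (a b c : ℕ) :
    ((a + b + c).choose (a + b) * (a + b).choose a : K) = (a + b + c)! / (a ! * b ! * c !) := by
  rw [Nat.cast_add_choose, Nat.cast_add_choose]
  field_simp [(a + b).factorial_ne_zero]

/-- Hurwitz's multinomial identity with vanishing exponent shifts, for `n = 3`:
for every natural number `m` and all real `x₁, x₂, x₃`,
`Σ_{k₁+k₂+k₃=m} m!/(k₁!k₂!k₃!) (x₁+k₁)^{k₁} (x₂+k₂)^{k₂} (x₃+k₃)^{k₃}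
  = Σ_{k=0}^m C(m,k) (x₁+x₂+x₃+m)^{m-k} (k+1)!`. -/
theorem hurwitz_trinomial_identity (m : ℕ) (x₁ x₂ x₃ : ℝ) :
    (∑ k ∈ Finset.Nat.antidiagonalTuple 3 m,
      (m.factorial : ℝ) / ((k 0).factorial * (k 1).factorial * (k 2).factorial) *
        ((x₁ + k 0) ^ (k 0) * (x₂ + k 1) ^ (k 1) * (x₃ + k 2) ^ (k 2))) =
    ∑ k ∈ Finset.range (m + 1),
      (m.choose k : ℝ) * (x₁ + x₂ + x₃ + m) ^ (m - k) * ((k + 1).factorial : ℝ) := by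
  refine (Nat.sum_antidiagonalTuple_three m fun a b c ↦ (m ! : ℝ) / (a ! * b ! * c !) *
    ((x₁ + a) ^ a * (x₂ + b) ^ b * (x₃ + c) ^ c)).trans ?_
  calc _ = ∑ p ∈ antidiagonal m, m.choose p.1 *
          (∑ q ∈ antidiagonal p.1, p.1.choose q.1 * (x₁ + q.1) ^ q.1 * (x₂ + q.2) ^ q.2) *
            (x₃ + p.2) ^ p.2 := by
        refine sum_congr rfl fun p hp ↦ ?_
        rw [mul_sum, sum_mul]
        refine sum_congr rfl fun q hq ↦ ?_
        rw [← HasAntidiagonal.mem_antidiagonal.mp hp, ← HasAntidiagonal.mem_antidiagonal.mp hq,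
          ← Nat.cast_add_add_choose_mul_choose]
        ring
    _ = ∑ p ∈ antidiagonal m, m.choose p.1 *
          (∑ q ∈ antidiagonal p.1, p.1.choose q.1 * q.1 ! * (x₁ + x₂ + p.1) ^ q.2) *
            (x₃ + p.2) ^ p.2 := by
        simp_rw [sum_antidiagonal_choose_mul_add_pow_mul_add_pow]
    _ = ∑ p ∈ antidiagonal m, m.choose p.1 * (x₁ + x₂ + x₃ + m) ^ p.2 * (p.1 + 1)! := by
        rw [sum_antidiagonal_choose_mul_sum_mul_add_pow (fun t ↦ (t ! : ℝ))]
        refine sum_congr rfl fun p _ ↦ ?_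
        rw [← Nat.sum_antidiagonal_choose_mul_factorial_mul_factorial]
        push_cast
        ring
    _ = _ := Nat.sum_antidiagonal_eq_sum_range_succ
          (fun k l ↦ (m.choose k : ℝ) * (x₁ + x₂ + x₃ + m) ^ l * (k + 1)!) m
end
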